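/- arXiv:2103.15633 — 3 statements merged into one kernel-verified Lean document; each statement's English description precedes it below -/
import Mathlib

section
/- Let n ≥ 2 be an integer, let V = V_1 ⊗ V_2 be a tensor product of vector spaces over a field F, and let E = {x_a ⊗ y_a : a ∈ [n]} be a multiset of product tensors with x_a ∈ V_1 \ {0}, y_a ∈ V_2 \ {0}. If E is connected, then both multisets {x_a : a ∈ [n]} and {y_a : a ∈ [n]} are connected. -/
open scoped TensorProduct

/-- A multiset of vectors `v 0, ..., v (n-1)` *splits* if there is a subset `S` of indices
with `1 ≤ |S| ≤ n - 1` such that the span of all the vectors is the (internal) direct sum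
of the span of the vectors indexed by `S` and the span of those indexed by `Sᶜ`.
The multiset is *connected* if it does not split. -/
def Splits (F : Type*) [Field F] {V : Type*} [AddCommGroup V] [Module F V]
    {n : ℕ} (v : Fin n → V) : Prop :=
  ∃ S : Finset (Fin n), 1 ≤ S.card ∧ S.card ≤ n - 1 ∧
    Submodule.span F (Set.range v) =
      Submodule.span F (v '' ↑S) ⊔ Submodule.span F (v '' ↑(Sᶜ)) ∧
    Disjoint (Submodule.span F (v '' ↑S)) (Submodule.span F (v '' ↑(Sᶜ)))

lemma span_split_aux {F V : Type*} [Field F] [AddCommGroup V] [Module F V] {n : ℕ}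
    (v : Fin n → V) (S : Finset (Fin n)) :
    Submodule.span F (Set.range v) =
      Submodule.span F (v '' ↑S) ⊔ Submodule.span F (v '' ↑(Sᶜ)) := by
  rw [← Submodule.span_union, ← Set.image_union]
  congr 1
  rw [Finset.coe_compl, Set.union_compl_self, Set.image_univ]

lemma exists_proj_aux {F V : Type*} [Field F] [AddCommGroup V] [Module F V]
    {A B : Submodule F V} (h : Disjoint A B) :
    ∃ π : V →ₗ[F] V, (∀ a ∈ A, π a = a) ∧ (∀ b ∈ B, π b = 0) := by
  have hker : LinearMap.ker (B.mkQ.comp A.subtype) = ⊥ := by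
    rw [LinearMap.ker_comp, Submodule.ker_mkQ]
    ext ⟨z, hz⟩
    simp only [Submodule.mem_comap, Submodule.subtype_apply, Submodule.mem_bot]
    constructor
    · intro hzB
      have : z ∈ (⊥ : Submodule F V) := h.le_bot ⟨hz, hzB⟩
      exact Subtype.ext (by simpa using this)
    · intro h0
      have : z = 0 := congrArg Subtype.val h0
      simp [this]
  obtain ⟨g, hg⟩ := LinearMap.exists_leftInverse_of_injective _ hker
  refine ⟨A.subtype ∘ₗ g ∘ₗ B.mkQ, ?_, ?_⟩
  · intro a ha
    have := congrArg (fun f => A.subtype (f ⟨a, ha⟩)) hg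
    simpa using this
  · intro b hb
    simp [(Submodule.Quotient.mk_eq_zero B).2 hb]

lemma splits_tensor_of_left {F V₁ V₂ : Type*} [Field F] [AddCommGroup V₁] [Module F V₁]
    [AddCommGroup V₂] [Module F V₂] {n : ℕ} (x : Fin n → V₁) (y : Fin n → V₂)
    (h : Splits F x) : Splits F (fun a => x a ⊗ₜ[F] y a) := by
  obtain ⟨S, h1, h2, _, hdisj⟩ := h
  obtain ⟨π, hπA, hπB⟩ := exists_proj_aux hdisj
  refine ⟨S, h1, h2, span_split_aux _ _, ?_⟩
  set L := TensorProduct.map π (LinearMap.id : V₂ →ₗ[F] V₂) with hLdef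
  have hS : Submodule.span F ((fun a => x a ⊗ₜ[F] y a) '' ↑S) ≤
      LinearMap.ker (L - LinearMap.id) := by
    rw [Submodule.span_le]
    rintro _ ⟨a, ha, rfl⟩
    simp [hLdef, LinearMap.mem_ker, LinearMap.sub_apply, TensorProduct.map_tmul,
      hπA _ (Submodule.subset_span ⟨a, ha, rfl⟩)]
  have hSc : Submodule.span F ((fun a => x a ⊗ₜ[F] y a) '' ↑(Sᶜ)) ≤ LinearMap.ker L := by
    rw [Submodule.span_le]
    rintro _ ⟨a, ha, rfl⟩
    simp [hLdef, LinearMap.mem_ker, TensorProduct.map_tmul,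
      hπB _ (Submodule.subset_span ⟨a, ha, rfl⟩)]
  rw [Submodule.disjoint_def]
  intro t htS htSc
  have e1 : L t = t := by
    have := hS htS
    simpa [LinearMap.mem_ker, LinearMap.sub_apply, sub_eq_zero] using this
  have e2 : L t = 0 := hSc htSc
  rw [← e1, e2]

lemma splits_tensor_of_right {F V₁ V₂ : Type*} [Field F] [AddCommGroup V₁] [Module F V₁]
    [AddCommGroup V₂] [Module F V₂] {n : ℕ} (x : Fin n → V₁) (y : Fin n → V₂)
    (h : Splits F y) : Splits F (fun a => x a ⊗ₜ[F] y a) := by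
  obtain ⟨S, h1, h2, _, hdisj⟩ := h
  obtain ⟨π, hπA, hπB⟩ := exists_proj_aux hdisj
  refine ⟨S, h1, h2, span_split_aux _ _, ?_⟩
  set L := TensorProduct.map (LinearMap.id : V₁ →ₗ[F] V₁) π with hLdef
  have hS : Submodule.span F ((fun a => x a ⊗ₜ[F] y a) '' ↑S) ≤
      LinearMap.ker (L - LinearMap.id) := by
    rw [Submodule.span_le]
    rintro _ ⟨a, ha, rfl⟩
    simp [hLdef, LinearMap.mem_ker, LinearMap.sub_apply, TensorProduct.map_tmul,
      hπA _ (Submodule.subset_span ⟨a, ha, rfl⟩)]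
  have hSc : Submodule.span F ((fun a => x a ⊗ₜ[F] y a) '' ↑(Sᶜ)) ≤ LinearMap.ker L := by
    rw [Submodule.span_le]
    rintro _ ⟨a, ha, rfl⟩
    simp [hLdef, LinearMap.mem_ker, TensorProduct.map_tmul,
      hπB _ (Submodule.subset_span ⟨a, ha, rfl⟩)]
  rw [Submodule.disjoint_def]
  intro t htS htSc
  have e1 : L t = t := by
    have := hS htS
    simpa [LinearMap.mem_ker, LinearMap.sub_apply, sub_eq_zero] using this
  have e2 : L t = 0 := hSc htSc
  rw [← e1, e2]

/-- If the multiset of product tensors `{x_a ⊗ y_a : a ∈ [n]}` is connected, then both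
multisets `{x_a : a ∈ [n]}` and `{y_a : a ∈ [n]}` are connected. -/
theorem connected_factors_connected (F : Type*) [Field F] {n : ℕ} (hn : 2 ≤ n)
    (V₁ V₂ : Type*) [AddCommGroup V₁] [Module F V₁] [AddCommGroup V₂] [Module F V₂]
    (x : Fin n → V₁) (y : Fin n → V₂)
    (hx : ∀ a, x a ≠ 0) (hy : ∀ a, y a ≠ 0)
    (hconn : ¬ Splits F (fun a => x a ⊗ₜ[F] y a)) :
    ¬ Splits F x ∧ ¬ Splits F y :=
  ⟨fun h => hconn (splits_tensor_of_left x y h),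
   fun h => hconn (splits_tensor_of_right x y h)⟩
end

section
/- Let n ≥ 2 and m ≥ 2 be integers, let V = V_1 ⊗ ... ⊗ V_m be a tensor product of vector spaces over a field F, let {x_a = x_{a,1} ⊗ ... ⊗ x_{a,m} : a ∈ [n]} be a multiset of product tensors, and for S ⊆ [n], j ∈ [m] let d_j^S = dim span{x_{a,j} : a ∈ S}. If |S| ≤ Σ_{j=1}^m (d_j^S − 1) + 1 for every subset S ⊆ [n] with 2 ≤ |S| ≤ n, then the multiset {x_a : a ∈ [n]} is linearly independent. -/
set_option linter.unusedSectionVars false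

open Submodule Module Finset

section aux

variable (F : Type*) [Field F] {ι : Type*} [DecidableEq ι] {m : ℕ}
  {V : Fin m → Type*} [∀ j, AddCommGroup (V j)] [∀ j, Module F (V j)]

noncomputable def spx (x : ι → ∀ j, V j) (j : Fin m) (S : Finset ι) : Submodule F (V j) :=
  Submodule.span F ((fun b => x b j) '' ↑S)

variable (x : ι → ∀ j, V j)

lemma spx_fd (j : Fin m) (S : Finset ι) : FiniteDimensional F (spx F x j S) :=
  FiniteDimensional.span_of_finite F (S.finite_toSet.image _)

lemma spx_mono (j : Fin m) {S T : Finset ι} (h : S ⊆ T) : spx F x j S ≤ spx F x j T :=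
  span_mono (Set.image_mono (by exact_mod_cast h))

lemma mem_spx (j : Fin m) {S : Finset ι} {b : ι} (hb : b ∈ S) : x b j ∈ spx F x j S :=
  subset_span ⟨b, by simpa using hb, rfl⟩

lemma finrank_spx_mono (j : Fin m) {S T : Finset ι} (h : S ⊆ T) :
    finrank F (spx F x j S) ≤ finrank F (spx F x j T) := by
  haveI := spx_fd F x j T
  exact Submodule.finrank_mono (spx_mono F x j h)

lemma spx_insert (j : Fin m) (g : ι) (S : Finset ι) :
    spx F x j (insert g S) = Submodule.span F {x g j} ⊔ spx F x j S := by
  unfold spx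
  rw [Finset.coe_insert, Set.image_insert_eq, ← Submodule.span_union,
    Set.singleton_union]

lemma finrank_spx_insert_le (j : Fin m) (g : ι) (S : Finset ι) :
    finrank F (spx F x j (insert g S)) ≤ finrank F (spx F x j S) + 1 := by
  haveI := spx_fd F x j S
  haveI : FiniteDimensional F (Submodule.span F {x g j}) :=
    FiniteDimensional.span_of_finite F (Set.finite_singleton _)
  rw [spx_insert]
  calc finrank F ↥(Submodule.span F {x g j} ⊔ spx F x j S)
      ≤ finrank F (Submodule.span F {x g j}) + finrank F (spx F x j S) := by
        have := finrank_sup_add_finrank_inf_eq (Submodule.span F {x g j}) (spx F x j S)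
        omega
    _ ≤ finrank F (spx F x j S) + 1 := by
        have : finrank F (Submodule.span F {x g j}) ≤ 1 := by
          rcases eq_or_ne (x g j) 0 with h | h
          · rw [h, Submodule.span_zero_singleton]; simp
          · simp [finrank_span_singleton h]
        omega

/-- the rank of `S` in the mode-`j` matroid contracted by `A`, as an integer. -/
noncomputable def rkZ (j : Fin m) (A S : Finset ι) : ℤ :=
  (finrank F (spx F x j (S ∪ A)) : ℤ) - finrank F (spx F x j A)

lemma rkZ_empty (j : Fin m) (A : Finset ι) : rkZ F x j A ∅ = 0 := by
  unfold rkZ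
  rw [Finset.empty_union]
  ring

lemma rkZ_nonneg (j : Fin m) (A S : Finset ι) : 0 ≤ rkZ F x j A S := by
  have := finrank_spx_mono F x j (Finset.subset_union_right (s₁ := S) (s₂ := A))
  unfold rkZ; omega

lemma rkZ_singleton_le_one (j : Fin m) (A : Finset ι) (g : ι) : rkZ F x j A {g} ≤ 1 := by
  have : ({g} : Finset ι) ∪ A = insert g A := by
    rw [Finset.insert_eq]
  have h2 := finrank_spx_insert_le F x j g A
  unfold rkZ
  rw [this]
  omega

lemma not_mem_spx_of_rkZ (j : Fin m) (A : Finset ι) (g : ι) (h : rkZ F x j A {g} = 1) :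
    x g j ∉ spx F x j A := by
  intro hg
  have : ({g} : Finset ι) ∪ A = insert g A := by rw [Finset.insert_eq]
  unfold rkZ at h
  rw [this] at h
  have : spx F x j (insert g A) = spx F x j A := by
    unfold spx
    rw [Finset.coe_insert, Set.image_insert_eq]
    exact Submodule.span_insert_eq_span hg
  rw [this] at h
  omega

/-- contraction identity used in the tight-set branch -/
lemma rkZ_union (j : Fin m) (A T S : Finset ι) :
    rkZ F x j (A ∪ T) S = rkZ F x j A (S ∪ T) - rkZ F x j A T := by
  unfold rkZ
  have h1 : S ∪ (A ∪ T) = (S ∪ T) ∪ A := by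
    ext b; simp [Finset.mem_union]; tauto
  have h2 : T ∪ A = A ∪ T := Finset.union_comm _ _
  rw [h1, h2]
  ring

lemma rkZ_insert_ge (j : Fin m) (A S : Finset ι) (g : ι) :
    rkZ F x j A S - 1 ≤ rkZ F x j (insert g A) S := by
  unfold rkZ
  have h1 : finrank F (spx F x j (S ∪ A)) ≤ finrank F (spx F x j (S ∪ insert g A)) :=
    finrank_spx_mono F x j (Finset.union_subset_union_right (Finset.subset_insert _ _))
  have h2 := finrank_spx_insert_le F x j g A
  omega

/-- `Z` is independent in the mode-`j` matroid contracted by `A`. -/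
def IndepMod (j : Fin m) (A Z : Finset ι) : Prop :=
  ∀ c : ι → F, (∑ b ∈ Z, c b • x b j) ∈ spx F x j A → ∀ b ∈ Z, c b = 0

lemma indepMod_empty (j : Fin m) (A : Finset ι) : IndepMod F x j A ∅ := by
  intro c _ b hb; simp at hb

lemma IndepMod.union_of_tight {j : Fin m} {A T ZT Z' : Finset ι}
    (hZT : ZT ⊆ T) (hZ'T : Disjoint Z' T)
    (h1 : IndepMod F x j A ZT) (h2 : IndepMod F x j (A ∪ T) Z') :
    IndepMod F x j A (ZT ∪ Z') := by
  intro c hc b hb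
  have hdisj : Disjoint ZT Z' := hZ'T.symm.mono_left hZT
  rw [Finset.sum_union hdisj] at hc
  have hZTmem : (∑ b ∈ ZT, c b • x b j) ∈ spx F x j (A ∪ T) := by
    apply Submodule.sum_mem
    intro b hb
    exact Submodule.smul_mem _ _ (mem_spx F x j (Finset.mem_union_right _ (hZT hb)))
  have hsum_mem : (∑ b ∈ ZT, c b • x b j) + (∑ b ∈ Z', c b • x b j) ∈ spx F x j (A ∪ T) :=
    spx_mono F x j (Finset.subset_union_left) hc
  have hZ'mem : (∑ b ∈ Z', c b • x b j) ∈ spx F x j (A ∪ T) := by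
    have := Submodule.sub_mem _ hsum_mem hZTmem
    simpa using this
  have hcZ' : ∀ b ∈ Z', c b = 0 := h2 c hZ'mem
  have hzero : (∑ b ∈ Z', c b • x b j) = 0 :=
    Finset.sum_eq_zero (fun b hb => by rw [hcZ' b hb, zero_smul])
  rw [hzero, add_zero] at hc
  have hcZT := h1 c hc
  rcases Finset.mem_union.1 hb with h | h
  · exact hcZT b h
  · exact hcZ' b h

lemma IndepMod.insert_indep {j : Fin m} {A Z : Finset ι} {g : ι} (hg : g ∉ Z)
    (hx : x g j ∉ spx F x j A)
    (h : IndepMod F x j (insert g A) Z) : IndepMod F x j A (insert g Z) := by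
  intro c hc b hb
  rw [Finset.sum_insert hg] at hc
  have hxg : x g j ∈ spx F x j (insert g A) := mem_spx F x j (Finset.mem_insert_self _ _)
  have hA_le : spx F x j A ≤ spx F x j (insert g A) := spx_mono F x j (Finset.subset_insert _ _)
  have hZmem : (∑ b ∈ Z, c b • x b j) ∈ spx F x j (insert g A) := by
    have : (∑ b ∈ Z, c b • x b j) = (c g • x g j + ∑ b ∈ Z, c b • x b j) - c g • x g j :=
      (add_sub_cancel_left _ _).symm
    rw [this]
    exact Submodule.sub_mem _ (hA_le hc) (Submodule.smul_mem _ _ hxg)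
  have hcZ : ∀ b ∈ Z, c b = 0 := h c hZmem
  have hzero : (∑ b ∈ Z, c b • x b j) = 0 :=
    Finset.sum_eq_zero (fun b hb => by rw [hcZ b hb, zero_smul])
  rw [hzero, add_zero] at hc
  have hcg : c g = 0 := by
    by_contra hne
    exact hx (by simpa [smul_smul, inv_mul_cancel₀ hne] using Submodule.smul_mem _ (c g)⁻¹ hc)
  rcases Finset.mem_insert.1 hb with h' | h'
  · rw [h']; exact hcg
  · exact hcZ b h'


lemma edm : ∀ (k : ℕ) (G : Finset ι), G.card ≤ k → ∀ A : Fin m → Finset ι,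
    (∀ S ⊆ G, (S.card : ℤ) ≤ ∑ j, rkZ F x j (A j) S) →
    ∃ Z : Fin m → Finset ι, (∀ j, Z j ⊆ G) ∧ (∀ b ∈ G, ∃ j, b ∈ Z j) ∧
      ∀ j, IndepMod F x j (A j) (Z j) := by
  intro k
  induction k with
  | zero =>
    intro G hG A _
    have : G = ∅ := Finset.card_eq_zero.1 (Nat.le_zero.1 hG)
    subst this
    exact ⟨fun _ => ∅, fun j => Finset.Subset.refl _, fun b hb => by simp at hb,
      fun j => indepMod_empty F x j (A j)⟩
  | succ k IH =>
    intro G hG A hall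
    rcases Finset.eq_empty_or_nonempty G with rfl | hne
    · exact ⟨fun _ => ∅, fun j => Finset.Subset.refl _, fun b hb => by simp at hb,
        fun j => indepMod_empty F x j (A j)⟩
    by_cases ht : ∃ T ⊆ G, T.Nonempty ∧ T ≠ G ∧ ∑ j, rkZ F x j (A j) T = T.card
    · obtain ⟨T, hTG, hTne, hTneG, htight⟩ := ht
      have hTcard : T.card ≤ k := by
        have hss : T ⊂ G := hTG.ssubset_of_ne hTneG
        have := Finset.card_lt_card hss
        omega
      obtain ⟨ZT, hZT1, hZT2, hZT3⟩ := IH T hTcard A (fun S hS => hall S (hS.trans hTG))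
      have hGT : (G \ T).card ≤ k := by
        have h1 := Finset.card_sdiff_of_subset hTG
        have h2 := Finset.card_pos.2 hTne
        have h3 := Finset.card_le_card hTG
        omega
      have hall' : ∀ S ⊆ G \ T, (S.card : ℤ) ≤ ∑ j, rkZ F x j (A j ∪ T) S := by
        intro S hS
        have hd : Disjoint S T := Finset.sdiff_disjoint.mono_left hS
        have hST : S ∪ T ⊆ G := Finset.union_subset (hS.trans (Finset.sdiff_subset)) hTG
        have h1 := hall (S ∪ T) hST
        have hcard : (S ∪ T).card = S.card + T.card := Finset.card_union_of_disjoint hd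
        have h2 : ∑ j, rkZ F x j (A j ∪ T) S
            = ∑ j, rkZ F x j (A j) (S ∪ T) - ∑ j, rkZ F x j (A j) T := by
          rw [← Finset.sum_sub_distrib]
          exact Finset.sum_congr rfl (fun j _ => rkZ_union F x j (A j) T S)
        rw [h2, htight]
        have hc' : ((S ∪ T).card : ℤ) = S.card + T.card := by exact_mod_cast hcard
        omega
      obtain ⟨Z', hZ'1, hZ'2, hZ'3⟩ := IH (G \ T) hGT (fun j => A j ∪ T) hall'
      refine ⟨fun j => ZT j ∪ Z' j, ?_, ?_, ?_⟩
      · intro j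
        exact Finset.union_subset ((hZT1 j).trans hTG) ((hZ'1 j).trans Finset.sdiff_subset)
      · intro b hb
        by_cases hbT : b ∈ T
        · obtain ⟨j, hj⟩ := hZT2 b hbT
          exact ⟨j, Finset.mem_union_left _ hj⟩
        · obtain ⟨j, hj⟩ := hZ'2 b (Finset.mem_sdiff.2 ⟨hb, hbT⟩)
          exact ⟨j, Finset.mem_union_right _ hj⟩
      · intro j
        exact IndepMod.union_of_tight F x (hZT1 j)
          (Finset.sdiff_disjoint.mono_left (hZ'1 j)) (hZT3 j) (hZ'3 j)
    · obtain ⟨g, hg⟩ := hne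
      have h1 : (1 : ℤ) ≤ ∑ j, rkZ F x j (A j) {g} := by
        have := hall {g} (Finset.singleton_subset_iff.2 hg)
        simpa using this
      have hjex : ∃ j, rkZ F x j (A j) {g} = 1 := by
        by_contra hno
        push_neg at hno
        have hle : ∀ j ∈ Finset.univ, rkZ F x j (A j) {g} ≤ 0 := by
          intro j _
          have ha := rkZ_singleton_le_one F x j (A j) g
          have hb := rkZ_nonneg F x j (A j) {g}
          have hcc := hno j
          omega
        have := Finset.sum_nonpos hle
        omega
      obtain ⟨j0, hj0⟩ := hjex
      have hxg : x g j0 ∉ spx F x j0 (A j0) := not_mem_spx_of_rkZ F x j0 (A j0) g hj0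
      set A' := Function.update A j0 (insert g (A j0)) with hA'
      have hGe : (G.erase g).card ≤ k := by
        have := Finset.card_erase_of_mem hg
        have := Finset.card_pos.2 ⟨g, hg⟩
        omega
      have hall' : ∀ S ⊆ G.erase g, (S.card : ℤ) ≤ ∑ j, rkZ F x j (A' j) S := by
        intro S hS
        rcases S.eq_empty_or_nonempty with rfl | hSne
        · simp [rkZ_empty]
        · have hSG : S ⊆ G := hS.trans (Finset.erase_subset _ _)
          have hSneG : S ≠ G := by
            intro h
            exact Finset.notMem_erase g G (hS (h ▸ hg))
          have hnot : ∑ j, rkZ F x j (A j) S ≠ S.card := by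
            intro h
            exact ht ⟨S, hSG, hSne, hSneG, h⟩
          have hge := hall S hSG
          have hsplit : ∀ (B : Fin m → Finset ι), ∑ j, rkZ F x j (B j) S
              = rkZ F x j0 (B j0) S + ∑ j ∈ Finset.univ.erase j0, rkZ F x j (B j) S :=
            fun B => (Finset.add_sum_erase _ _ (Finset.mem_univ j0)).symm
          have hcong : ∑ j ∈ Finset.univ.erase j0, rkZ F x j (A' j) S
              = ∑ j ∈ Finset.univ.erase j0, rkZ F x j (A j) S := by
            apply Finset.sum_congr rfl
            intro j hj
            rw [hA', Function.update_of_ne (Finset.mem_erase.1 hj).1]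
          have hA'j0 : A' j0 = insert g (A j0) := by rw [hA', Function.update_self]
          have hdrop := rkZ_insert_ge F x j0 (A j0) S g
          have e1 := hsplit A
          have e2 := hsplit A'
          rw [hA'j0] at e2
          omega
      obtain ⟨Z'', hZ1, hZ2, hZ3⟩ := IH (G.erase g) hGe A' hall'
      refine ⟨Function.update Z'' j0 (insert g (Z'' j0)), ?_, ?_, ?_⟩
      · intro j
        by_cases hj : j = j0
        · rw [hj, Function.update_self]
          exact Finset.insert_subset hg ((hZ1 j0).trans (Finset.erase_subset _ _))
        · rw [Function.update_of_ne hj]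
          exact (hZ1 j).trans (Finset.erase_subset _ _)
      · intro b hb
        by_cases hbg : b = g
        · subst hbg
          exact ⟨j0, by rw [Function.update_self]; exact Finset.mem_insert_self _ _⟩
        · obtain ⟨j, hj⟩ := hZ2 b (Finset.mem_erase.2 ⟨hbg, hb⟩)
          by_cases hjj : j = j0
          · exact ⟨j0, by rw [Function.update_self]; exact Finset.mem_insert_of_mem (hjj ▸ hj)⟩
          · exact ⟨j, by rw [Function.update_of_ne hjj]; exact hj⟩
      · intro j
        by_cases hj : j = j0
        · rw [hj, Function.update_self]
          have hgZ : g ∉ Z'' j0 := fun h => Finset.notMem_erase g G (hZ1 j0 h)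
          have hind : IndepMod F x j0 (insert g (A j0)) (Z'' j0) := by
            have h3 := hZ3 j0
            rwa [hA', Function.update_self] at h3
          exact IndepMod.insert_indep F x hgZ hxg hind
        · rw [Function.update_of_ne hj]
          have h3 := hZ3 j
          rwa [hA', Function.update_of_ne hj] at h3


lemma exists_dual_fun {W : Type*} [AddCommGroup W] [Module F W] (p : Submodule F W) (v : W)
    (hv : v ∉ p) : ∃ f : W →ₗ[F] F, (∀ u ∈ p, f u = 0) ∧ f v = 1 := by
  have hvq : (p.mkQ v) ≠ 0 := by
    simpa [Submodule.Quotient.mk_eq_zero] using hv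
  have h := (Module.forall_dual_apply_eq_zero_iff F (p.mkQ v)).not.2 hvq
  push_neg at h
  obtain ⟨g, hg⟩ := h
  refine ⟨((g (p.mkQ v))⁻¹ • g).comp p.mkQ, ?_, ?_⟩
  · intro u hu
    have : p.mkQ u = 0 := by simpa [Submodule.Quotient.mk_eq_zero] using hu
    simp [this]
  · simpa using inv_mul_cancel₀ hg

lemma not_mem_spx_of_indepMod {j : Fin m} {Z : Finset ι} {a : ι}
    (hind : IndepMod F x j {a} Z) (ha : x a j ≠ 0) : x a j ∉ spx F x j Z := by
  intro hmem
  unfold spx at hmem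
  rw [Finsupp.mem_span_image_iff_linearCombination] at hmem
  obtain ⟨l, hl, hsum⟩ := hmem
  rw [Finsupp.linearCombination_apply] at hsum
  have hsupp : l.support ⊆ Z := by
    intro b hb
    have h2 := (Finsupp.mem_supported F l).1 hl hb
    exact_mod_cast h2
  have hsum' : (∑ b ∈ Z, l b • x b j) = x a j := by
    rw [← hsum]
    exact (Finsupp.sum_of_support_subset l hsupp (fun i c => c • x i j)
      (fun i _ => zero_smul F (x i j))).symm
  have hmem' : (∑ b ∈ Z, l b • x b j) ∈ spx F x j ({a} : Finset ι) := by
    rw [hsum']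
    exact mem_spx F x j (Finset.mem_singleton_self a)
  have hzero := hind l hmem'
  have : x a j = 0 := by
    rw [← hsum']
    exact Finset.sum_eq_zero (fun b hb => by rw [hzero b hb, zero_smul])
  exact ha this

end aux

/-- If `|S| ≤ Σ_j (d_j^S - 1) + 1` for every subset `S ⊆ [n]` with `2 ≤ |S| ≤ n`, then the
multiset of product tensors `{x_a : a ∈ [n]}` is linearly independent. -/
theorem product_tensors_linearIndependent (F : Type*) [Field F] {n m : ℕ}
    (hn : 2 ≤ n) (hm : 2 ≤ m)
    (V : Fin m → Type*) [∀ j, AddCommGroup (V j)] [∀ j, Module F (V j)]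
    (x : Fin n → ∀ j, V j)
    (hx : ∀ a, PiTensorProduct.tprod F (x a) ≠ 0)
    (hcond : ∀ S : Finset (Fin n), 2 ≤ S.card →
      S.card ≤
        (∑ j, (Module.finrank F (Submodule.span F ((fun a => x a j) '' ↑S)) - 1)) + 1) :
    LinearIndependent F (fun a => PiTensorProduct.tprod F (x a)) := by
  classical
  have hxj : ∀ a j, x a j ≠ 0 := by
    intro a j h
    exact hx a ((PiTensorProduct.tprod F).map_coord_zero j h)
  rw [Fintype.linearIndependent_iff]
  intro cc hcc a
  set G : Finset (Fin n) := Finset.univ.erase a with hGdef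
  -- finrank of the singleton span
  have hsing : ∀ j, finrank F (spx F x j ({a} : Finset (Fin n))) = 1 := by
    intro j
    have : spx F x j ({a} : Finset (Fin n)) = Submodule.span F {x a j} := by
      unfold spx
      rw [Finset.coe_singleton, Set.image_singleton]
    rw [this, finrank_span_singleton (hxj a j)]
  -- the Hall condition for the contracted matroids
  have hall : ∀ S ⊆ G, (S.card : ℤ) ≤ ∑ j, rkZ F x j ({a} : Finset (Fin n)) S := by
    intro S hS
    rcases S.eq_empty_or_nonempty with rfl | hSne
    · simp [rkZ_empty]
    · have haS : a ∉ S := fun h => (Finset.notMem_erase a _) (hS h)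
      have hcard2 : 2 ≤ (insert a S).card := by
        rw [Finset.card_insert_of_notMem haS]
        have := Finset.card_pos.2 hSne
        omega
      have hins : (insert a S).card ≤
          (∑ j, (finrank F (spx F x j (insert a S)) - 1)) + 1 := hcond _ hcard2
      have hone : ∀ j, 1 ≤ finrank F (spx F x j (insert a S)) := by
        intro j
        have h2 : finrank F (spx F x j ({a} : Finset (Fin n)))
            ≤ finrank F (spx F x j (insert a S)) :=
          finrank_spx_mono F x j (Finset.singleton_subset_iff.2 (Finset.mem_insert_self a S))
        rw [hsing j] at h2
        exact h2
      have hins' : ((insert a S).card : ℤ) ≤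
          (∑ j, ((finrank F (spx F x j (insert a S)) : ℤ) - 1)) + 1 := by
        calc ((insert a S).card : ℤ)
            ≤ (((∑ j, (finrank F (spx F x j (insert a S)) - 1)) + 1 : ℕ) : ℤ) :=
              Nat.cast_le.2 hins
          _ = (∑ j, ((finrank F (spx F x j (insert a S)) : ℤ) - 1)) + 1 := by
              push_cast
              rw [Finset.sum_congr rfl (fun j _ => Nat.cast_sub (hone j))]
              norm_num
      have hrk : ∀ j ∈ Finset.univ, rkZ F x j ({a} : Finset (Fin n)) S
          = (finrank F (spx F x j (insert a S)) : ℤ) - 1 := by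
        intro j _
        unfold rkZ
        rw [hsing j]
        have : S ∪ ({a} : Finset (Fin n)) = insert a S := by
          rw [Finset.union_comm, ← Finset.insert_eq]
        rw [this]
        norm_num
      rw [Finset.sum_congr rfl hrk]
      have hcins : ((insert a S).card : ℤ) = S.card + 1 := by
        rw [Finset.card_insert_of_notMem haS]
        push_cast
        ring
      omega
  obtain ⟨Z, hZ1, hZ2, hZ3⟩ := edm F x G.card G le_rfl (fun _ => {a}) hall
  have hnot : ∀ j, x a j ∉ spx F x j (Z j) :=
    fun j => not_mem_spx_of_indepMod F x (hZ3 j) (hxj a j)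
  have hf : ∀ j, ∃ f : V j →ₗ[F] F, (∀ u ∈ spx F x j (Z j), f u = 0) ∧ f (x a j) = 1 :=
    fun j => exists_dual_fun F _ _ (hnot j)
  choose f hf0 hf1 using hf
  set Λ :=
    PiTensorProduct.lift ((MultilinearMap.mkPiAlgebra F (Fin m) F).compLinearMap f) with hΛdef
  have hΛ : ∀ b, Λ (PiTensorProduct.tprod F (x b)) = if b = a then 1 else 0 := by
    intro b
    rw [hΛdef, PiTensorProduct.lift.tprod, MultilinearMap.compLinearMap_apply,
      MultilinearMap.mkPiAlgebra_apply]
    by_cases hb : b = a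
    · subst hb
      rw [if_pos rfl]
      exact Finset.prod_eq_one (fun j _ => hf1 j)
    · rw [if_neg hb]
      have hbG : b ∈ G := Finset.mem_erase.2 ⟨hb, Finset.mem_univ b⟩
      obtain ⟨j, hj⟩ := hZ2 b hbG
      exact Finset.prod_eq_zero (Finset.mem_univ j) (hf0 j _ (mem_spx F x j hj))
  have hfin := congrArg Λ hcc
  rw [map_sum, map_zero] at hfin
  have : ∑ b, cc b • Λ (PiTensorProduct.tprod F (x b)) = cc a := by
    rw [Finset.sum_congr rfl (fun b _ => by rw [hΛ b])]
    simp [Finset.sum_ite_eq']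
  rw [← this]
  rw [← hfin]
  exact Finset.sum_congr rfl (fun b _ => (map_smul Λ (cc b) _).symm)
end

section
/- Let n ≥ 2 and m ≥ 2 be integers, let V = V_1 ⊗ ... ⊗ V_m be a tensor product of vector spaces over a field F, let {x_a = x_{a,1} ⊗ ... ⊗ x_{a,m} : a ∈ [n]} be a multiset of product tensors, and for each j ∈ [m] let d_j = dim span{x_{a,j} : a ∈ [n]}. If {x_a : a ∈ [n]} forms a circuit, then d_j > 1 for at most n − 2 of the indices j ∈ [m]. -/
open PiTensorProduct Submodule Module Set Function
open scoped TensorProduct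

/-- A multiset of nonzero vectors forms a *circuit* if it is linearly dependent and every
proper submultiset is linearly independent. -/
def IsCircuit (F : Type*) [Field F] {V : Type*} [AddCommGroup V] [Module F V]
    {n : ℕ} (v : Fin n → V) : Prop :=
  ¬ LinearIndependent F v ∧
    ∀ S : Finset (Fin n), S.card < n → LinearIndependent F (fun a : ↥S => v ↑a)

section Aux

variable {F : Type*} [Field F]
/-- For a nonzero vector there is a functional taking value 1 on it. -/
lemma exists_dual_one {V : Type*} [AddCommGroup V] [Module F V] {v : V} (hv : v ≠ 0) :
    ∃ g : V →ₗ[F] F, g v = 1 := by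
  obtain ⟨q, hq⟩ := (Submodule.span F {v}).exists_isCompl
  let e := LinearEquiv.toSpanNonzeroSingleton F V v hv
  refine ⟨e.symm.toLinearMap.comp (Submodule.projectionOnto _ _ hq), ?_⟩
  have h1 : Submodule.projectionOnto _ _ hq v
      = ⟨v, Submodule.mem_span_singleton_self v⟩ := by
    have := Submodule.projectionOnto_apply_left hq
      (⟨v, Submodule.mem_span_singleton_self v⟩ : Submodule.span F {v})
    simpa using this
  have h2 : e.symm ⟨v, Submodule.mem_span_singleton_self v⟩ = 1 := by
    have := LinearEquiv.toSpanNonzeroSingleton_one F V v hv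
    rw [← this, LinearEquiv.symm_apply_apply]
  simp [h1, h2]

lemma exists_dual_ne_zero {V : Type*} [AddCommGroup V] [Module F V] {v : V} (hv : v ≠ 0) :
    ∃ g : V →ₗ[F] F, g v ≠ 0 := by
  obtain ⟨g, hg⟩ := exists_dual_one (F := F) hv
  exact ⟨g, by rw [hg]; exact one_ne_zero⟩

/-- If all functionals kill a vector, it is zero. -/
lemma eq_zero_of_forall_dual {V : Type*} [AddCommGroup V] [Module F V] {v : V}
    (h : ∀ g : V →ₗ[F] F, g v = 0) : v = 0 := by
  by_contra hv
  obtain ⟨g, hg⟩ := exists_dual_one (F := F) hv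
  rw [h g] at hg
  exact zero_ne_one hg

end Aux

section Main

variable {F : Type*} [Field F] {m : ℕ}
  {V : Fin m → Type*} [∀ j, AddCommGroup (V j)] [∀ j, Module F (V j)]

noncomputable def Phi (j : Fin m) (g : V j →ₗ[F] F) (v0 : V j) :
    (⨂[F] k, V k) →ₗ[F] ⨂[F] k, V k :=
  PiTensorProduct.map
    (Function.update (fun k => (LinearMap.id : V k →ₗ[F] V k)) j (g.smulRight v0))

lemma Phi_tprod (j : Fin m) (g : V j →ₗ[F] F) (v0 : V j) (y : ∀ k, V k) :
    Phi j g v0 (PiTensorProduct.tprod F y)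
      = g (y j) • PiTensorProduct.tprod F (Function.update y j v0) := by
  rw [Phi, PiTensorProduct.map_tprod]
  have h1 : (fun k => (Function.update (fun k => (LinearMap.id : V k →ₗ[F] V k)) j
      (g.smulRight v0)) k (y k)) = Function.update y j (g (y j) • v0) := by
    funext k
    by_cases hk : k = j
    · subst hk; simp
    · simp [Function.update_of_ne hk]
  rw [h1]
  exact MultilinearMap.map_update_smul _ y j (g (y j)) v0

variable {n : ℕ}

/-- Separation: a nonzero element of the span of the product tensors is not killed by all
slot-`j` contractions. -/
lemma exists_Phi_ne_zero (x : Fin n → ∀ j, V j) (j : Fin m) {v0 : V j} (hv0 : v0 ≠ 0)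
    {w : ⨂[F] k, V k}
    (hw : w ∈ Submodule.span F (Set.range fun b => PiTensorProduct.tprod F (x b)))
    (hw0 : w ≠ 0) :
    ∃ g : V j →ₗ[F] F, Phi j g v0 w ≠ 0 := by
  by_contra hcon
  push_neg at hcon
  apply hw0
  set Z := Submodule.span F (Set.range fun b => x b j) with hZ
  haveI : FiniteDimensional F Z := FiniteDimensional.span_of_finite F (Set.finite_range _)
  let β := Module.finBasis F Z
  obtain ⟨q, hq⟩ := Z.exists_isCompl
  set π : V j →ₗ[F] Z := Submodule.projectionOnto _ _ hq with hπdef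
  obtain ⟨hf, hfv0⟩ := exists_dual_one (F := F) hv0
  set Θ : (⨂[F] k, V k) →ₗ[F] ⨂[F] k, V k :=
    ∑ s, (Phi j hf (↑(β s))).comp (Phi j ((β.coord s).comp π) v0) with hΘ
  have key : Θ w = w := by
    clear hcon hw0
    induction hw using Submodule.span_induction with
    | mem u hu =>
        obtain ⟨b, rfl⟩ := hu
        have hmem : x b j ∈ Z := Submodule.subset_span (Set.mem_range_self b)
        have hπx : (↑(π (x b j)) : V j) = x b j := by
          have := Submodule.projectionOnto_apply_left hq
            (⟨x b j, hmem⟩ : Z)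
          rw [hπdef]
          simpa using congrArg (Subtype.val) this
        have step1 : Θ (PiTensorProduct.tprod F (x b))
            = ∑ s, (β.repr (π (x b j)) s) •
                PiTensorProduct.tprod F (Function.update (x b) j (↑(β s))) := by
          rw [hΘ, LinearMap.sum_apply]
          refine Finset.sum_congr rfl fun s _ => ?_
          rw [LinearMap.comp_apply, Phi_tprod, map_smul, Phi_tprod]
          simp [Function.update_idem, hfv0, Basis.coord_apply]
        rw [step1]
        have step2 : ∑ s, (β.repr (π (x b j)) s) •
              PiTensorProduct.tprod F (Function.update (x b) j (↑(β s)))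
            = PiTensorProduct.tprod F (Function.update (x b) j
                (∑ s, (β.repr (π (x b j)) s) • (↑(β s) : V j))) := by
          rw [MultilinearMap.map_update_sum]
          refine Finset.sum_congr rfl fun s _ => ?_
          rw [MultilinearMap.map_update_smul]
        rw [step2]
        have step3 : (∑ s, (β.repr (π (x b j)) s) • (↑(β s) : V j)) = x b j := by
          have : (∑ s, (β.repr (π (x b j)) s) • (↑(β s) : V j))
              = ↑(∑ s, (β.repr (π (x b j)) s) • (β s)) := by
            push_cast
            rfl
          rw [this, Basis.sum_repr, hπx]
        rw [step3, Function.update_eq_self]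
    | zero => simp
    | add u v hu hv ihu ihv => rw [map_add, ihu, ihv]
    | smul a u hu ihu => rw [map_smul, ihu]
  rw [← key, hΘ, LinearMap.sum_apply]
  refine Finset.sum_eq_zero fun s _ => ?_
  rw [LinearMap.comp_apply, hcon ((β.coord s).comp π), map_zero]


/-- Connectivity of a family of product tensors: the spans of the two halves of any
nontrivial bipartition intersect nontrivially. -/
def Conn (F : Type*) [Field F] {m n : ℕ} {V : Fin m → Type*}
    [∀ j, AddCommGroup (V j)] [∀ j, Module F (V j)] (x : Fin n → ∀ j, V j) : Prop :=
  ∀ S : Finset (Fin n), S.Nonempty → S ≠ Finset.univ →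
    ∃ w : ⨂[F] k, V k, w ≠ 0 ∧
      w ∈ Submodule.span F ((fun b => PiTensorProduct.tprod F (x b)) '' ↑S) ∧
      w ∈ Submodule.span F ((fun b => PiTensorProduct.tprod F (x b)) '' ↑(Sᶜ))

lemma Phi_mem_span_image {x : Fin n → ∀ j, V j} (j : Fin m) (g : V j →ₗ[F] F) (v0 : V j)
    {S : Set (Fin n)} {w : ⨂[F] k, V k}
    (hw : w ∈ Submodule.span F ((fun b => PiTensorProduct.tprod F (x b)) '' S)) :
    Phi j g v0 w ∈ Submodule.span F
      ((fun b => PiTensorProduct.tprod F (Function.update (x b) j v0)) '' S) := by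
  have h1 : Phi j g v0 w ∈ Submodule.map (Phi j g v0)
      (Submodule.span F ((fun b => PiTensorProduct.tprod F (x b)) '' S)) :=
    Submodule.mem_map_of_mem hw
  rw [Submodule.map_span] at h1
  refine Submodule.span_le.mpr ?_ h1
  rintro u ⟨u', ⟨b, hb, rfl⟩, rfl⟩
  rw [Phi_tprod]
  exact Submodule.smul_mem _ _ (Submodule.subset_span ⟨b, hb, rfl⟩)

lemma Conn.collapse {x : Fin n → ∀ j, V j} (hc : Conn F x) (j : Fin m) {v0 : V j}
    (hv0 : v0 ≠ 0) : Conn F (fun b => Function.update (x b) j v0) := by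
  intro S hS hSu
  obtain ⟨w, hw0, hw1, hw2⟩ := hc S hS hSu
  have hwr : w ∈ Submodule.span F (Set.range fun b => PiTensorProduct.tprod F (x b)) := by
    refine Submodule.span_mono ?_ hw1
    rintro u ⟨b, _, rfl⟩; exact Set.mem_range_self b
  obtain ⟨g, hg⟩ := exists_Phi_ne_zero x j hv0 hwr hw0
  exact ⟨Phi j g v0 w, hg, Phi_mem_span_image j g v0 hw1, Phi_mem_span_image j g v0 hw2⟩


/-- Collapsing a slot with at least two directions loses at least one dimension
of the span, for connected families. -/
lemma SLweak (hn : 0 < n) (x : Fin n → ∀ j, V j) (hz : ∀ b k, x b k ≠ 0)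
    (hconn : Conn F x) (j : Fin m)
    (hd2 : 2 ≤ finrank F (Submodule.span F (Set.range fun b => x b j)))
    {v0 : V j} (hv0 : v0 ≠ 0) :
    finrank F (Submodule.span F
        (Set.range fun b => PiTensorProduct.tprod F (Function.update (x b) j v0))) + 1
      ≤ finrank F (Submodule.span F (Set.range fun b => PiTensorProduct.tprod F (x b))) := by
  classical
  set T : Set (⨂[F] k, V k) :=
    Set.range (fun b => PiTensorProduct.tprod F (Function.update (x b) j v0)) with hT
  obtain ⟨s, hsT, hsspan, hsli⟩ := exists_linearIndependent F T
  haveI : Fintype s := ((Set.finite_range _).subset hsT).fintype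
  have hex : ∀ v : s, ∃ b : Fin n, PiTensorProduct.tprod F (Function.update (x b) j v0) = ↑v :=
    fun v => hsT v.2
  choose ind hind using hex
  -- lifted family is linearly independent
  have hlift : LinearIndependent F (fun v : s => PiTensorProduct.tprod F (x (ind v))) := by
    rw [Fintype.linearIndependent_iff]
    intro lam hlam v
    have hall : ∀ g : V j →ₗ[F] F, lam v * g (x (ind v) j) = 0 := by
      intro g
      have h1 : Phi j g v0 (∑ u, lam u • PiTensorProduct.tprod F (x (ind u))) = 0 := by
        rw [hlam, map_zero]
      rw [map_sum] at h1
      have h2 : ∑ u, (lam u * g (x (ind u) j)) • ((u : Set.Elem s) : ⨂[F] k, V k) = 0 := by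
        rw [← h1]
        refine Finset.sum_congr rfl fun u _ => ?_
        rw [map_smul, Phi_tprod, hind u, smul_smul]
      exact Fintype.linearIndependent_iff.mp hsli _ h2 v
    obtain ⟨g, hg⟩ := exists_dual_ne_zero (F := F) (hz (ind v) j)
    exact (mul_eq_zero.mp (hall g)).resolve_right hg
  -- dimension bookkeeping
  haveI : FiniteDimensional F
      (Submodule.span F (Set.range fun b => PiTensorProduct.tprod F (x b))) :=
    FiniteDimensional.span_of_finite F (Set.finite_range _)
  have hcardT : finrank F (Submodule.span F T) = Fintype.card s := by
    rw [← hsspan, finrank_span_set_eq_card hsli, Set.toFinset_card]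
  have hliftrank :
      finrank F (Submodule.span F
        (Set.range fun v : s => PiTensorProduct.tprod F (x (ind v)))) = Fintype.card s :=
    finrank_span_eq_card hlift
  have hle : Submodule.span F (Set.range fun v : s => PiTensorProduct.tprod F (x (ind v)))
      ≤ Submodule.span F (Set.range fun b => PiTensorProduct.tprod F (x b)) := by
    refine Submodule.span_mono ?_
    rintro u ⟨v, rfl⟩; exact Set.mem_range_self (ind v)
  have hgoal0 : Fintype.card s
      ≤ finrank F (Submodule.span F (Set.range fun b => PiTensorProduct.tprod F (x b))) := by
    rw [← hliftrank]; exact Submodule.finrank_mono hle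
  by_contra hcontra
  push_neg at hcontra
  have heq : finrank F (Submodule.span F (Set.range fun b => PiTensorProduct.tprod F (x b)))
      = Fintype.card s := by
    have : finrank F (Submodule.span F (Set.range fun b => PiTensorProduct.tprod F (x b)))
        ≤ finrank F (Submodule.span F T) := by omega
    omega
  have hspan_eq : Submodule.span F (Set.range fun v : s => PiTensorProduct.tprod F (x (ind v)))
      = Submodule.span F (Set.range fun b => PiTensorProduct.tprod F (x b)) :=
    Submodule.eq_of_le_of_finrank_le hle (by rw [heq, hliftrank])
  -- a nonparallel pair in slot j
  have hnp : ∃ e0 e1 : Fin n,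
      Submodule.span F {x e0 j} ≠ Submodule.span F {x e1 j} := by
    by_contra hall
    push_neg at hall
    have hsub : Set.range (fun b => x b j) ⊆ ↑(Submodule.span F {x (⟨0, hn⟩ : Fin n) j}) := by
      rintro u ⟨b, rfl⟩
      have hbb := hall b ⟨0, hn⟩
      have : x b j ∈ Submodule.span F {x (⟨0, hn⟩ : Fin n) j} := by
        rw [← hbb]; exact Submodule.mem_span_singleton_self _
      exact this
    haveI : FiniteDimensional F (Submodule.span F {x (⟨0, hn⟩ : Fin n) j}) :=
      FiniteDimensional.span_of_finite F (Set.finite_singleton _)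
    have h2 : finrank F (Submodule.span F (Set.range fun b => x b j)) ≤ 1 := by
      have hmono := Submodule.finrank_mono (Submodule.span_le.mpr hsub)
      rwa [finrank_span_singleton (hz _ j)] at hmono
    omega
  obtain ⟨e0, e1, hne01⟩ := hnp
  set S : Finset (Fin n) :=
    Finset.univ.filter (fun e => Submodule.span F {x e j} = Submodule.span F {x e0 j}) with hSdef
  have he0S : e0 ∈ S := by simp [hSdef]
  have he1S : e1 ∉ S := by
    simp only [hSdef, Finset.mem_filter, Finset.mem_univ, true_and]
    exact fun h => hne01 h.symm
  obtain ⟨w, hw0, hwS, hwSc⟩ := hconn S ⟨e0, he0S⟩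
    (fun h => he1S (h ▸ Finset.mem_univ e1))
  -- main structural claim
  have main : ∀ e : Fin n, (PiTensorProduct.tprod F (x e)) ∈ Submodule.span F
      ((fun v : s => PiTensorProduct.tprod F (x (ind v))) ''
        {v : s | Submodule.span F {x (ind v) j} = Submodule.span F {x e j}}) := by
    intro e
    have h1 : PiTensorProduct.tprod F (x e)
        ∈ Submodule.span F (Set.range fun v : s => PiTensorProduct.tprod F (x (ind v))) := by
      rw [hspan_eq]; exact Submodule.subset_span (Set.mem_range_self e)
    obtain ⟨c, hc⟩ := (mem_span_range_iff_exists_fun F).mp h1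
    have h2 : PiTensorProduct.tprod F (Function.update (x e) j v0)
        ∈ Submodule.span F (Set.range ((↑) : s → ⨂[F] k, V k)) := by
      rw [Subtype.range_coe, hsspan]
      exact Submodule.subset_span (Set.mem_range_self e)
    obtain ⟨ct, hct⟩ := (mem_span_range_iff_exists_fun F).mp h2
    have hrel : ∀ (g : V j →ₗ[F] F) (v : s),
        c v * g (x (ind v) j) = g (x e j) * ct v := by
      intro g v
      have hA : Phi j g v0 (∑ u, c u • PiTensorProduct.tprod F (x (ind u)))
          = Phi j g v0 (PiTensorProduct.tprod F (x e)) := by rw [hc]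
      rw [map_sum, Phi_tprod] at hA
      have hL : ∑ u, (c u * g (x (ind u) j)) • ((u : Set.Elem s) : ⨂[F] k, V k)
          = ∑ u, (g (x e j) * ct u) • ((u : Set.Elem s) : ⨂[F] k, V k) := by
        calc ∑ u, (c u * g (x (ind u) j)) • ((u : Set.Elem s) : ⨂[F] k, V k)
            = ∑ u, c u • Phi j g v0 (PiTensorProduct.tprod F (x (ind u))) := by
              refine Finset.sum_congr rfl fun u _ => ?_
              rw [Phi_tprod, hind u, smul_smul]
          _ = g (x e j) • PiTensorProduct.tprod F (Function.update (x e) j v0) := by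
              rw [← hA]
              refine Finset.sum_congr rfl fun u _ => ?_
              rw [map_smul]
          _ = g (x e j) • ∑ u, ct u • ((u : Set.Elem s) : ⨂[F] k, V k) := by rw [hct]
          _ = ∑ u, (g (x e j) * ct u) • ((u : Set.Elem s) : ⨂[F] k, V k) := by
              rw [Finset.smul_sum]
              refine Finset.sum_congr rfl fun u _ => ?_
              rw [smul_smul]
      have hz0 : ∑ u, (c u * g (x (ind u) j) - g (x e j) * ct u)
          • ((u : Set.Elem s) : ⨂[F] k, V k) = 0 := by
        rw [← sub_eq_zero] at hL
        rw [← hL, ← Finset.sum_sub_distrib]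
        refine Finset.sum_congr rfl fun u _ => ?_
        rw [sub_smul]
      exact sub_eq_zero.mp (Fintype.linearIndependent_iff.mp hsli _ hz0 v)
    have hpar : ∀ v : s, c v ≠ 0 →
        Submodule.span F {x (ind v) j} = Submodule.span F {x e j} := by
      intro v hcv
      have hvec : c v • x (ind v) j = ct v • x e j := by
        have hforall : ∀ g : V j →ₗ[F] F, g (c v • x (ind v) j - ct v • x e j) = 0 := by
          intro g
          rw [map_sub, map_smul, map_smul]
          have h' := hrel g v
          simp only [smul_eq_mul]
          rw [sub_eq_zero, h', mul_comm]
        have := eq_zero_of_forall_dual (F := F) hforall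
        exact sub_eq_zero.mp this
      have hctv : ct v ≠ 0 := by
        intro h0
        rw [h0, zero_smul] at hvec
        exact hz (ind v) j ((smul_eq_zero.mp hvec).resolve_left hcv)
      have hxv : x (ind v) j = ((c v)⁻¹ * ct v) • x e j := by
        rw [mul_smul, ← hvec, ← mul_smul, inv_mul_cancel₀ hcv, one_smul]
      rw [hxv]
      exact Submodule.span_singleton_smul_eq
        (IsUnit.mk0 _ (mul_ne_zero (inv_ne_zero hcv) hctv)) _
    rw [← hc]
    refine Submodule.sum_mem _ fun v _ => ?_
    by_cases hcv : c v = 0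
    · rw [hcv, zero_smul]; exact Submodule.zero_mem _
    · exact Submodule.smul_mem _ _ (Submodule.subset_span ⟨v, hpar v hcv, rfl⟩)
  -- bounding the two spans
  have hS1 : Submodule.span F ((fun b => PiTensorProduct.tprod F (x b)) '' ↑S)
      ≤ Submodule.span F ((fun v : s => PiTensorProduct.tprod F (x (ind v))) ''
          {v : s | Submodule.span F {x (ind v) j} = Submodule.span F {x e0 j}}) := by
    refine Submodule.span_le.mpr ?_
    rintro u ⟨e, heS, rfl⟩
    have heq' : Submodule.span F {x e j} = Submodule.span F {x e0 j} := by
      have : e ∈ S := heS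
      simpa [hSdef] using this
    have hm := main e
    rw [heq'] at hm
    exact hm
  have hS2 : Submodule.span F ((fun b => PiTensorProduct.tprod F (x b)) '' ↑(Sᶜ))
      ≤ Submodule.span F ((fun v : s => PiTensorProduct.tprod F (x (ind v))) ''
          {v : s | ¬ (Submodule.span F {x (ind v) j} = Submodule.span F {x e0 j})}) := by
    refine Submodule.span_le.mpr ?_
    rintro u ⟨e, heSc, rfl⟩
    have hene : ¬ (Submodule.span F {x e j} = Submodule.span F {x e0 j}) := by
      have : e ∈ Sᶜ := heSc
      simpa [hSdef] using Finset.mem_compl.mp this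
    refine Submodule.span_le.mpr ?_ (main e)
    refine Set.Subset.trans (Set.image_mono ?_) Submodule.subset_span
    intro v hv
    exact fun h => hene ((Set.mem_setOf_eq ▸ hv).symm.trans h)
  have hdisj : Disjoint
      (Submodule.span F ((fun v : s => PiTensorProduct.tprod F (x (ind v))) ''
        {v : s | Submodule.span F {x (ind v) j} = Submodule.span F {x e0 j}}))
      (Submodule.span F ((fun v : s => PiTensorProduct.tprod F (x (ind v))) ''
        {v : s | ¬ (Submodule.span F {x (ind v) j} = Submodule.span F {x e0 j})})) := by
    refine hlift.disjoint_span_image ?_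
    rw [Set.disjoint_left]
    intro v hv1 hv2
    exact hv2 hv1
  have : w = 0 := by
    have h1 := hS1 hwS
    have h2 := hS2 hwSc
    exact Submodule.disjoint_def.mp hdisj w h1 h2
  exact hw0 this


/-- A connected family of product tensors with nonzero slots spans a space of dimension
larger than the number of slots with at least two directions. -/
lemma weakL (hn2 : 2 ≤ n) : ∀ (t : ℕ) (x : Fin n → ∀ j, V j), (∀ b k, x b k ≠ 0) → Conn F x →
    (Finset.univ.filter fun j : Fin m =>
      2 ≤ finrank F (Submodule.span F (Set.range fun b => x b j))).card = t →
    t + 1 ≤ finrank F (Submodule.span F (Set.range fun b => PiTensorProduct.tprod F (x b))) := by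
  intro t
  induction t with
  | zero =>
    intro x hz hconn hcard
    set S : Finset (Fin n) := {(⟨0, by omega⟩ : Fin n)} with hSdef
    have hSne : S ≠ Finset.univ := by
      intro h
      have h1 : (⟨1, by omega⟩ : Fin n) ∈ S := h ▸ Finset.mem_univ _
      rw [hSdef, Finset.mem_singleton] at h1
      exact absurd (congrArg Fin.val h1) (by simp)
    obtain ⟨w, hw0, hw1, -⟩ := hconn S ⟨_, Finset.mem_singleton_self _⟩ hSne
    have hwr : w ∈ Submodule.span F (Set.range fun b => PiTensorProduct.tprod F (x b)) := by
      refine Submodule.span_mono ?_ hw1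
      rintro u ⟨b, -, rfl⟩; exact Set.mem_range_self b
    haveI : FiniteDimensional F
        (Submodule.span F (Set.range fun b => PiTensorProduct.tprod F (x b))) :=
      FiniteDimensional.span_of_finite F (Set.finite_range _)
    have hnt : Nontrivial
        (Submodule.span F (Set.range fun b => PiTensorProduct.tprod F (x b))) := by
      refine ⟨⟨w, hwr⟩, 0, ?_⟩
      simp only [ne_eq, Submodule.mk_eq_zero]
      exact hw0
    have := Module.finrank_pos (R := F)
      (M := Submodule.span F (Set.range fun b => PiTensorProduct.tprod F (x b)))
    omega
  | succ t ih =>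
    intro x hz hconn hcard
    have hne : (Finset.univ.filter fun j : Fin m =>
        2 ≤ finrank F (Submodule.span F (Set.range fun b => x b j))).Nonempty := by
      rw [← Finset.card_pos, hcard]; omega
    obtain ⟨j, hj⟩ := hne
    have hd2 : 2 ≤ finrank F (Submodule.span F (Set.range fun b => x b j)) :=
      (Finset.mem_filter.mp hj).2
    have hv0 : x (⟨0, by omega⟩ : Fin n) j ≠ 0 := hz _ j
    have hz' : ∀ b k, Function.update (x b) j (x (⟨0, by omega⟩ : Fin n) j) k ≠ 0 := by
      intro b k
      by_cases hk : k = j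
      · subst hk; rw [Function.update_self]; exact hv0
      · rw [Function.update_of_ne hk]; exact hz b k
    have hconn' : Conn F (fun b => Function.update (x b) j (x (⟨0, by omega⟩ : Fin n) j)) :=
      hconn.collapse j hv0
    have hcard' : (Finset.univ.filter fun k : Fin m =>
        2 ≤ finrank F (Submodule.span F (Set.range fun b =>
          Function.update (x b) j (x (⟨0, by omega⟩ : Fin n) j) k))).card = t := by
      have hset : (Finset.univ.filter fun k : Fin m =>
          2 ≤ finrank F (Submodule.span F (Set.range fun b =>
            Function.update (x b) j (x (⟨0, by omega⟩ : Fin n) j) k)))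
          = (Finset.univ.filter fun k : Fin m =>
            2 ≤ finrank F (Submodule.span F (Set.range fun b => x b k))).erase j := by
        ext k
        simp only [Finset.mem_filter, Finset.mem_erase, Finset.mem_univ, true_and]
        by_cases hk : k = j
        · subst hk
          constructor
          · intro h
            exfalso
            have hconst : (fun b => Function.update (x b) k (x (⟨0, by omega⟩ : Fin n) k) k)
                = fun _ => x (⟨0, by omega⟩ : Fin n) k := by
              funext b; rw [Function.update_self]
            haveI : Nonempty (Fin n) := ⟨⟨0, by omega⟩⟩
            rw [hconst, Set.range_const, finrank_span_singleton hv0] at h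
            omega
          · intro h; exact absurd rfl h.1
        · have hfun : (fun b => Function.update (x b) j (x (⟨0, by omega⟩ : Fin n) j) k)
              = (fun b => x b k) := by
            funext b; rw [Function.update_of_ne hk]
          rw [hfun]
          exact ⟨fun h => ⟨hk, h⟩, fun h => h.2⟩
      rw [hset, Finset.card_erase_of_mem hj, hcard]
      omega
    have hIH : t + 1 ≤ finrank F (Submodule.span F (Set.range fun b =>
        PiTensorProduct.tprod F (Function.update (x b) j (x (⟨0, by omega⟩ : Fin n) j)))) :=
      ih _ hz' hconn' hcard'
    have hSL := SLweak (by omega) x hz hconn j hd2 hv0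
    omega


end Main

/-- If the multiset of product tensors `{x_a : a ∈ [n]}` forms a circuit, then `d_j > 1` for
at most `n - 2` of the indices `j ∈ [m]`. -/
theorem circuit_dim_bound (F : Type*) [Field F] {n m : ℕ} (hn : 2 ≤ n) (hm : 2 ≤ m)
    (V : Fin m → Type*) [∀ j, AddCommGroup (V j)] [∀ j, Module F (V j)]
    (x : Fin n → ∀ j, V j)
    (hx : ∀ a, PiTensorProduct.tprod F (x a) ≠ 0)
    (d : Fin m → ℕ)
    (hd : ∀ j, d j = Module.finrank F (Submodule.span F (Set.range fun a => x a j)))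
    (hcirc : IsCircuit F (fun a => PiTensorProduct.tprod F (x a))) :
    (Finset.univ.filter fun j : Fin m => 1 < d j).card ≤ n - 2 := by
  classical
  have hz : ∀ a k, x a k ≠ 0 := by
    intro a k h
    exact hx a (MultilinearMap.map_coord_zero _ k h)
  obtain ⟨c, hcsum, a₀, ha₀⟩ := Fintype.not_linearIndependent_iff.mp hcirc.1
  have hcall : ∀ a, c a ≠ 0 := by
    intro b hb
    have hScard : (Finset.univ.erase b).card < n := by
      rw [Finset.card_erase_of_mem (Finset.mem_univ b), Finset.card_univ, Fintype.card_fin]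
      omega
    have hLI := hcirc.2 (Finset.univ.erase b) hScard
    have h2 : ∑ i ∈ Finset.univ.erase b, c i • PiTensorProduct.tprod F (x i)
        = ∑ i : Fin n, c i • PiTensorProduct.tprod F (x i) := by
      have h3 := Finset.sum_erase_add Finset.univ
        (fun i => c i • PiTensorProduct.tprod F (x i)) (Finset.mem_univ b)
      beta_reduce at h3
      rw [hb, zero_smul, add_zero] at h3
      exact h3
    have hsum : ∑ i : (Finset.univ.erase b : Finset (Fin n)),
        c ↑i • PiTensorProduct.tprod F (x ↑i) = 0 := by
      rw [Finset.sum_coe_sort (Finset.univ.erase b)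
        (fun i => c i • PiTensorProduct.tprod F (x i)), h2]
      exact hcsum
    have hall0 := Fintype.linearIndependent_iff.mp hLI _ hsum
    rcases eq_or_ne a₀ b with rfl | hab
    · exact ha₀ hb
    · exact ha₀ (hall0 ⟨a₀, Finset.mem_erase.mpr ⟨hab, Finset.mem_univ _⟩⟩)
  have hconn : Conn F x := by
    intro S hSne hSuniv
    refine ⟨∑ a ∈ S, c a • PiTensorProduct.tprod F (x a), ?_, ?_, ?_⟩
    · intro h0
      have hScard : S.card < n := by
        have := Finset.card_lt_card (Finset.ssubset_univ_iff.mpr hSuniv)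
        simpa using this
      have hLI := hcirc.2 S hScard
      have hsum : ∑ i : (S : Finset (Fin n)), c ↑i • PiTensorProduct.tprod F (x ↑i) = 0 := by
        rw [Finset.sum_coe_sort S (fun i => c i • PiTensorProduct.tprod F (x i))]
        exact h0
      obtain ⟨a, haS⟩ := hSne
      exact hcall a (Fintype.linearIndependent_iff.mp hLI _ hsum ⟨a, haS⟩)
    · exact Submodule.sum_mem _ fun a ha =>
        Submodule.smul_mem _ _ (Submodule.subset_span ⟨a, ha, rfl⟩)
    · have hneg : ∑ a ∈ S, c a • PiTensorProduct.tprod F (x a)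
          = - ∑ a ∈ Sᶜ, c a • PiTensorProduct.tprod F (x a) := by
        rw [eq_neg_iff_add_eq_zero, Finset.sum_add_sum_compl]
        exact hcsum
      rw [hneg]
      exact Submodule.neg_mem _ (Submodule.sum_mem _ fun a ha =>
        Submodule.smul_mem _ _ (Submodule.subset_span ⟨a, ha, rfl⟩))
  have hrank : finrank F (Submodule.span F
      (Set.range fun b => PiTensorProduct.tprod F (x b))) ≤ n - 1 := by
    have hexp : c a₀ • PiTensorProduct.tprod F (x a₀)
        = - ∑ a ∈ Finset.univ.erase a₀, c a • PiTensorProduct.tprod F (x a) := by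
      have h4 := Finset.sum_erase_add Finset.univ
        (fun a => c a • PiTensorProduct.tprod F (x a)) (Finset.mem_univ a₀)
      beta_reduce at h4
      rw [hcsum] at h4
      exact eq_neg_of_add_eq_zero_right h4
    have hmem : PiTensorProduct.tprod F (x a₀) ∈ Submodule.span F
        (Set.range fun a : {a : Fin n // a ≠ a₀} => PiTensorProduct.tprod F (x ↑a)) := by
      have hx₀ : PiTensorProduct.tprod F (x a₀) = (c a₀)⁻¹ •
          - ∑ a ∈ Finset.univ.erase a₀, c a • PiTensorProduct.tprod F (x a) := by
        rw [← hexp, ← mul_smul, inv_mul_cancel₀ (hcall a₀), one_smul]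
      rw [hx₀]
      exact Submodule.smul_mem _ _ (Submodule.neg_mem _ (Submodule.sum_mem _ fun a ha =>
        Submodule.smul_mem _ _ (Submodule.subset_span
          ⟨⟨a, (Finset.mem_erase.mp ha).1⟩, rfl⟩)))
    have hle : Submodule.span F (Set.range fun b => PiTensorProduct.tprod F (x b))
        ≤ Submodule.span F
          (Set.range fun a : {a : Fin n // a ≠ a₀} => PiTensorProduct.tprod F (x ↑a)) := by
      rw [Submodule.span_le]
      rintro u ⟨a, rfl⟩
      rcases eq_or_ne a a₀ with rfl | hne
      · exact hmem
      · exact Submodule.subset_span ⟨⟨a, hne⟩, rfl⟩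
    have hfr : finrank F (Submodule.span F
        (Set.range fun a : {a : Fin n // a ≠ a₀} => PiTensorProduct.tprod F (x ↑a))) ≤ n - 1 := by
      have h5 := finrank_range_le_card (R := F)
        (fun a : {a : Fin n // a ≠ a₀} => PiTensorProduct.tprod F (x ↑a))
      simp only [Set.finrank] at h5
      have hcardsub : Fintype.card {a : Fin n // a ≠ a₀} = n - 1 := by
        rw [Fintype.card_subtype_compl, Fintype.card_subtype_eq, Fintype.card_fin]
      rwa [hcardsub] at h5
    haveI : FiniteDimensional F (Submodule.span F
        (Set.range fun a : {a : Fin n // a ≠ a₀} => PiTensorProduct.tprod F (x ↑a))) :=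
      FiniteDimensional.span_of_finite F (Set.finite_range _)
    exact le_trans (Submodule.finrank_mono hle) hfr
  have hfilter : (Finset.univ.filter fun j : Fin m => 1 < d j)
      = (Finset.univ.filter fun j : Fin m =>
          2 ≤ finrank F (Submodule.span F (Set.range fun a => x a j))) := by
    refine Finset.filter_congr fun j _ => ?_
    rw [hd j]
    exact ⟨fun h => h, fun h => h⟩
  have hmain := weakL (F := F) hn
    (Finset.univ.filter fun j : Fin m =>
      2 ≤ finrank F (Submodule.span F (Set.range fun a => x a j))).card x hz hconn rfl
  rw [hfilter]
  omega
end
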